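/- arXiv:2109.03189 — 12 statements merged into one kernel-verified Lean document; each statement's English description precedes it below -/
import Mathlib

section
/- Let F be a field of characteristic zero, let λ2, λ3 ∈ F \ {0,1} with λ2 ≠ λ3 and λ2·λ3 ≠ 1, and let q, r ∈ F satisfy q² = λ2λ3 and r² = (1−λ2)(1−λ3). For l ∈ {1,2} set Λ_l = (−(λ2+λ3) + (−1)^l·2q)/r². Then for all X, Y, Z ∈ F with Y² = X·Z·(X−Z)(X−λ2λ3 Z)(X−λ2 Z)(X−λ3 Z), the elements x_l = r(X−λ2 Z)(X−λ3 Z)XZ, y_l = (X−(−1)^l q Z)·Y, z_l = r³X²Z² satisfy the Legendre equation y_l² z_l = x_l (x_l − z_l)(x_l − Λ_l z_l). Moreover Λ1Λ2 = ((λ2+λ3)² − 4λ2λ3)/((1−λ2)²(1−λ3)²) and Λ1+Λ2 = −2(λ2+λ3)/((1−λ2)(1−λ3)). -/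
/-!
Write `u = (X - λ₂Z)(X - λ₃Z)` and `s = (-1)^l q`, so that `s² = λ₂λ₃` and `Λ_l r² = -(λ₂+λ₃) + 2s`.
Then `x_l = r·XZ·u`, and the relations on `r` and `s` make both remaining Legendre factors
split: `u - r²XZ = (X - Z)(X - λ₂λ₃Z)` and `u - Λ_l r²XZ = (X - sZ)²`. Hence the right-hand
side of the Legendre equation is `r³X²Z²(X - sZ)²` times the sextic defining `C₀`, which is
`y_l² z_l`. The symmetric functions of `Λ₁, Λ₂` follow from `Λ_l r² = -(λ₂+λ₃) ∓ 2q`.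
-/

section LegendreQuotient

variable {R : Type*} [CommRing R] {l2 l3 r s Λ X Z : R}

theorem rosenhain_quadratic_sub_eq_of_sq_eq (hr : r ^ 2 = (1 - l2) * (1 - l3)) :
    (X - l2 * Z) * (X - l3 * Z) - r ^ 2 * (X * Z) = (X - Z) * (X - l2 * l3 * Z) := by
  linear_combination (-(X * Z)) * hr

theorem rosenhain_quadratic_sub_eq_sq_of_modulus (hs : s ^ 2 = l2 * l3)
    (hΛ : Λ * r ^ 2 = -(l2 + l3) + 2 * s) :
    (X - l2 * Z) * (X - l3 * Z) - Λ * r ^ 2 * (X * Z) = (X - s * Z) ^ 2 := by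
  linear_combination (-(X * Z)) * hΛ - Z ^ 2 * hs

theorem legendre_eq_of_rosenhain_eq (hs : s ^ 2 = l2 * l3)
    (hr : r ^ 2 = (1 - l2) * (1 - l3)) (hΛ : Λ * r ^ 2 = -(l2 + l3) + 2 * s) {Y : R}
    (hY : Y ^ 2 = X * Z * (X - Z) * (X - l2 * l3 * Z) * (X - l2 * Z) * (X - l3 * Z)) :
    ((X - s * Z) * Y) ^ 2 * (r ^ 3 * X ^ 2 * Z ^ 2) =
      (r * (X - l2 * Z) * (X - l3 * Z) * X * Z) *
        ((r * (X - l2 * Z) * (X - l3 * Z) * X * Z) - r ^ 3 * X ^ 2 * Z ^ 2) *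
        ((r * (X - l2 * Z) * (X - l3 * Z) * X * Z) - Λ * (r ^ 3 * X ^ 2 * Z ^ 2)) := by
  set u := (X - l2 * Z) * (X - l3 * Z)
  calc ((X - s * Z) * Y) ^ 2 * (r ^ 3 * X ^ 2 * Z ^ 2)
      = r ^ 3 * X ^ 3 * Z ^ 3 * u * ((X - Z) * (X - l2 * l3 * Z)) * (X - s * Z) ^ 2 := by
        rw [mul_pow, hY]; ring
    _ = r ^ 3 * X ^ 3 * Z ^ 3 * u * (u - r ^ 2 * (X * Z)) * (u - Λ * r ^ 2 * (X * Z)) := by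
        rw [rosenhain_quadratic_sub_eq_of_sq_eq hr, rosenhain_quadratic_sub_eq_sq_of_modulus hs hΛ]
    _ = _ := by ring

end LegendreQuotient

theorem stmt_0_general (F : Type*) [Field F]
    (l2 l3 q r : F)
    (hl2' : l2 ≠ 1) (hl3' : l3 ≠ 1)
    (hq : q ^ 2 = l2 * l3) (hr : r ^ 2 = (1 - l2) * (1 - l3))
    (Λ : ℕ → F)
    (hΛ : ∀ l : ℕ, (l = 1 ∨ l = 2) →
      Λ l = (-(l2 + l3) + (-1 : F) ^ l * (2 * q)) / r ^ 2) :
    (∀ l : ℕ, (l = 1 ∨ l = 2) → ∀ X Y Z : F,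
      Y ^ 2 = X * Z * (X - Z) * (X - l2 * l3 * Z) * (X - l2 * Z) * (X - l3 * Z) →
      ((X - (-1 : F) ^ l * q * Z) * Y) ^ 2 * (r ^ 3 * X ^ 2 * Z ^ 2) =
        (r * (X - l2 * Z) * (X - l3 * Z) * X * Z) *
          ((r * (X - l2 * Z) * (X - l3 * Z) * X * Z) - r ^ 3 * X ^ 2 * Z ^ 2) *
          ((r * (X - l2 * Z) * (X - l3 * Z) * X * Z) - Λ l * (r ^ 3 * X ^ 2 * Z ^ 2))) ∧
    Λ 1 * Λ 2 = ((l2 + l3) ^ 2 - 4 * (l2 * l3)) / ((1 - l2) ^ 2 * (1 - l3) ^ 2) ∧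
    Λ 1 + Λ 2 = -(2 * (l2 + l3)) / ((1 - l2) * (1 - l3)) := by
  have hr0 : r ^ 2 ≠ 0 := hr ▸ mul_ne_zero (sub_ne_zero.2 hl2'.symm) (sub_ne_zero.2 hl3'.symm)
  have hΛr : ∀ l, (l = 1 ∨ l = 2) → Λ l * r ^ 2 = -(l2 + l3) + 2 * ((-1) ^ l * q) := by
    intro l hl
    rw [hΛ l hl, div_mul_cancel₀ _ hr0]
    ring
  have hs (l : ℕ) : ((-1 : F) ^ l * q) ^ 2 = l2 * l3 := by
    rw [mul_pow, ← pow_mul, pow_mul', neg_one_sq, one_pow, one_mul, hq]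
  have hΛ1 : Λ 1 * r ^ 2 = -(l2 + l3) - 2 * q := by linear_combination hΛr 1 (.inl rfl)
  have hΛ2 : Λ 2 * r ^ 2 = -(l2 + l3) + 2 * q := by linear_combination hΛr 2 (.inr rfl)
  refine ⟨fun l hl X Y Z hY => legendre_eq_of_rosenhain_eq (hs l) hr (hΛr l hl) hY, ?_, ?_⟩
  · rw [show (1 - l2) ^ 2 * (1 - l3) ^ 2 = (r ^ 2) ^ 2 by rw [hr]; ring,
      eq_div_iff (pow_ne_zero 2 hr0)]
    linear_combination (Λ 2 * r ^ 2) * hΛ1 + (-(l2 + l3) - 2 * q) * hΛ2 - 4 * hq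
  · rw [← hr, eq_div_iff hr0]
    linear_combination hΛ1 + hΛ2

/-- The quotient maps from the genus-two curve
`C₀ : Y² = XZ(X−Z)(X−λ₂λ₃Z)(X−λ₂Z)(X−λ₃Z)` (Rosenhain form with λ₁ = λ₂λ₃) to the
Legendre elliptic curves `E_l : y²z = x(x−z)(x−Λ_l z)`, together with the symmetric
functions of the moduli `Λ₁, Λ₂`. -/
theorem stmt_0 (F : Type*) [Field F] [CharZero F]
    (l2 l3 q r : F)
    (hl2 : l2 ≠ 0) (hl2' : l2 ≠ 1) (hl3 : l3 ≠ 0) (hl3' : l3 ≠ 1)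
    (hne : l2 ≠ l3) (hprod : l2 * l3 ≠ 1)
    (hq : q ^ 2 = l2 * l3) (hr : r ^ 2 = (1 - l2) * (1 - l3))
    (Λ : ℕ → F)
    (hΛ : ∀ l : ℕ, (l = 1 ∨ l = 2) →
      Λ l = (-(l2 + l3) + (-1 : F) ^ l * (2 * q)) / r ^ 2) :
    (∀ l : ℕ, (l = 1 ∨ l = 2) → ∀ X Y Z : F,
      Y ^ 2 = X * Z * (X - Z) * (X - l2 * l3 * Z) * (X - l2 * Z) * (X - l3 * Z) →
      ((X - (-1 : F) ^ l * q * Z) * Y) ^ 2 * (r ^ 3 * X ^ 2 * Z ^ 2) =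
        (r * (X - l2 * Z) * (X - l3 * Z) * X * Z) *
          ((r * (X - l2 * Z) * (X - l3 * Z) * X * Z) - r ^ 3 * X ^ 2 * Z ^ 2) *
          ((r * (X - l2 * Z) * (X - l3 * Z) * X * Z) - Λ l * (r ^ 3 * X ^ 2 * Z ^ 2))) ∧
    Λ 1 * Λ 2 = ((l2 + l3) ^ 2 - 4 * (l2 * l3)) / ((1 - l2) ^ 2 * (1 - l3) ^ 2) ∧
    Λ 1 + Λ 2 = -(2 * (l2 + l3)) / ((1 - l2) * (1 - l3)) :=
  stmt_0_general F l2 l3 q r hl2' hl3' hq hr Λ hΛ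
end

section
/- Let F be a field of characteristic zero, let λ2, λ3, q, r ∈ F with q² = λ2λ3, and set f(X,Z) = XZ(X−Z)(X−λ2λ3 Z)(X−λ2 Z)(X−λ3 Z). Then for all X, Z ∈ F one has f(λ2λ3 Z, X) = (λ2λ3)³ f(X,Z); in particular, if Y² = f(X,Z) then Y′² = f(X′,Z′) for (X′,Y′,Z′) = (λ2λ3 Z, (−1)^{l+1}λ2λ3 q Y, X), so the involution ȷ_l : [X:Y:Z] ↦ [λ2λ3 Z : (−1)^{l+1}λ2λ3 q Y : X] preserves the curve. Moreover, with x(X,Y,Z) = r(X−λ2 Z)(X−λ3 Z)XZ, y_l(X,Y,Z) = (X−(−1)^l q Z)Y, z(X,Y,Z) = r³X²Z², one has x(X′,Y′,Z′) = (λ2λ3)² x(X,Y,Z), y_l(X′,Y′,Z′) = (λ2λ3)² y_l(X,Y,Z), z(X′,Y′,Z′) = (λ2λ3)² z(X,Y,Z); hence π_{E_l} ∘ ȷ_l = π_{E_l} as maps of projective points. -/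
/-- The elliptic involution `ȷ_l : [X:Y:Z] ↦ [λ₂λ₃Z : (−1)^{l+1}λ₂λ₃qY : X]`
preserves the genus-two curve `Y² = f(X,Z)` with
`f(X,Z) = XZ(X−Z)(X−λ₂λ₃Z)(X−λ₂Z)(X−λ₃Z)`, and the quotient map `π_{E_l}` satisfies
`π_{E_l} ∘ ȷ_l = π_{E_l}` as maps of projective points. -/
theorem stmt_1 (F : Type*) [Field F] [CharZero F] (l2 l3 q r : F)
    (hq : q ^ 2 = l2 * l3) (l : ℕ) (hl : l = 1 ∨ l = 2) :
    (∀ X Z : F,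
      (l2 * l3 * Z) * X * ((l2 * l3 * Z) - X) * ((l2 * l3 * Z) - l2 * l3 * X) *
        ((l2 * l3 * Z) - l2 * X) * ((l2 * l3 * Z) - l3 * X) =
      (l2 * l3) ^ 3 *
        (X * Z * (X - Z) * (X - l2 * l3 * Z) * (X - l2 * Z) * (X - l3 * Z))) ∧
    (∀ X Y Z : F,
      Y ^ 2 = X * Z * (X - Z) * (X - l2 * l3 * Z) * (X - l2 * Z) * (X - l3 * Z) →
      ((-1 : F) ^ (l + 1) * (l2 * l3) * q * Y) ^ 2 =
        (l2 * l3 * Z) * X * ((l2 * l3 * Z) - X) * ((l2 * l3 * Z) - l2 * l3 * X) *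
          ((l2 * l3 * Z) - l2 * X) * ((l2 * l3 * Z) - l3 * X)) ∧
    (∀ X Y Z : F,
      r * ((l2 * l3 * Z) - l2 * X) * ((l2 * l3 * Z) - l3 * X) * (l2 * l3 * Z) * X =
        (l2 * l3) ^ 2 * (r * (X - l2 * Z) * (X - l3 * Z) * X * Z) ∧
      ((l2 * l3 * Z) - (-1 : F) ^ l * q * X) * ((-1 : F) ^ (l + 1) * (l2 * l3) * q * Y) =
        (l2 * l3) ^ 2 * ((X - (-1 : F) ^ l * q * Z) * Y) ∧
      r ^ 3 * (l2 * l3 * Z) ^ 2 * X ^ 2 = (l2 * l3) ^ 2 * (r ^ 3 * X ^ 2 * Z ^ 2)) := by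
  refine ⟨fun X Z => by ring, fun X Y Z h => ?_, fun X Y Z => ⟨by ring, ?_, by ring⟩⟩
  · rcases hl with rfl | rfl <;> simp only [pow_succ, pow_one, pow_two] <;>
      linear_combination (l2 * l3) ^ 2 * q ^ 2 * h + (l2 * l3) ^ 2 *
        (X * Z * (X - Z) * (X - l2 * l3 * Z) * (X - l2 * Z) * (X - l3 * Z)) * hq
  · rcases hl with rfl | rfl <;> simp only [pow_succ, pow_one, pow_two] <;>
      linear_combination (l2 * l3 * X * Y) * hq
end

section
/- Let F be a field of characteristic zero and Λ ∈ F. (i) If x, y ∈ F satisfy y² = x(x−1)(x−Λ), then X00 = x² − 2Λx + Λ, X01 = x² − Λ, X10 = x² − 2x + Λ, X11 = 2y satisfy the two quadric equations X01² = X10² + X11² and X00² = X10² + (1−Λ)X11². (ii) Conversely, if Λ ∉ {0,1} and X00, X01, X10, X11 ∈ F satisfy these two quadric equations, then x = Λ(X10 − X00), y = Λ(Λ−1)X11, z = (1−Λ)X01 + ΛX10 − X00 satisfy the homogeneous Legendre equation y²z = x(x−z)(x−Λz). -/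
/-- Birational equivalence between the Legendre elliptic curve
`y²z = x(x−z)(x−Λz)` and the complete intersection of quadrics
`X01² = X10² + X11²`, `X00² = X10² + (1−Λ)X11²`. -/
theorem stmt_2 (F : Type*) [Field F] [CharZero F] (Λ : F) :
    (∀ x y : F, y ^ 2 = x * (x - 1) * (x - Λ) →
      (x ^ 2 - Λ) ^ 2 = (x ^ 2 - 2 * x + Λ) ^ 2 + (2 * y) ^ 2 ∧
      (x ^ 2 - 2 * Λ * x + Λ) ^ 2 = (x ^ 2 - 2 * x + Λ) ^ 2 + (1 - Λ) * (2 * y) ^ 2) ∧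
    (Λ ≠ 0 → Λ ≠ 1 → ∀ X00 X01 X10 X11 : F,
      X01 ^ 2 = X10 ^ 2 + X11 ^ 2 →
      X00 ^ 2 = X10 ^ 2 + (1 - Λ) * X11 ^ 2 →
      (Λ * (Λ - 1) * X11) ^ 2 * ((1 - Λ) * X01 + Λ * X10 - X00) =
        (Λ * (X10 - X00)) *
          (Λ * (X10 - X00) - ((1 - Λ) * X01 + Λ * X10 - X00)) *
          (Λ * (X10 - X00) - Λ * ((1 - Λ) * X01 + Λ * X10 - X00))) := by
  constructor
  · intro x y h
    exact ⟨by linear_combination (-4 : F) * h, by linear_combination (4 * (Λ - 1)) * h⟩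
  · intro _ _ X00 X01 X10 X11 h1 h2
    linear_combination (Λ ^ 2 * (Λ - 1) ^ 2 * (X00 - X10)) * h1 +
      (Λ ^ 2 * (Λ - 1) ^ 2 * (X10 - X01)) * h2
end

section
/- Let F be a field of characteristic zero and Λ1, Λ2 ∈ F. Suppose X00, X01, X10, X11 ∈ F satisfy X01² = X10² + X11² and X00² = X10² + (1−Λ1)X11², and Y00, Y01, Y10, Y11 ∈ F satisfy Y01² = Y10² + Y11² and Y00² = Y10² + (1−Λ2)Y11². Then the products Z_{ij} := X_{ij}·Y_{ij} satisfy Q_{V0}(Z00, Z01, Z10, Z11) = 0. -/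
/-- The defining quartic polynomial of the surface `V₀` in `ℙ³`, with elliptic moduli
`Λ₁, Λ₂`. -/
def QV0 {F : Type*} [Field F] (L1 L2 Z00 Z01 Z10 Z11 : F) : F :=
  Z00 ^ 4 + (1 - L1) * (1 - L2) * Z01 ^ 4 + L1 * L2 * Z10 ^ 4
    + L1 * L2 * (1 - L1) * (1 - L2) * Z11 ^ 4
    - (2 - L1 - L2) * (Z00 ^ 2 * Z01 ^ 2 + L1 * L2 * (Z10 ^ 2 * Z11 ^ 2))
    - (2 * (L1 * L2) - L1 - L2) * (Z00 ^ 2 * Z11 ^ 2 + Z01 ^ 2 * Z10 ^ 2)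
    - (L1 + L2) * (Z00 ^ 2 * Z10 ^ 2 + (1 - L1) * (1 - L2) * (Z01 ^ 2 * Z11 ^ 2))

/-- if `(X00,X01,X10,X11)` lies on the quadric intersection `I_{Λ₁}` and
`(Y00,Y01,Y10,Y11)` lies on `I_{Λ₂}`, then the products `Z_ij = X_ij·Y_ij` lie on the
quartic surface `V₀`. -/
theorem stmt_3 (F : Type*) [Field F] [CharZero F] (L1 L2 : F)
    (X00 X01 X10 X11 Y00 Y01 Y10 Y11 : F)
    (hX1 : X01 ^ 2 = X10 ^ 2 + X11 ^ 2)
    (hX2 : X00 ^ 2 = X10 ^ 2 + (1 - L1) * X11 ^ 2)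
    (hY1 : Y01 ^ 2 = Y10 ^ 2 + Y11 ^ 2)
    (hY2 : Y00 ^ 2 = Y10 ^ 2 + (1 - L2) * Y11 ^ 2) :
    QV0 L1 L2 (X00 * Y00) (X01 * Y01) (X10 * Y10) (X11 * Y11) = 0 := by
  have e : ∀ a b : F, (a*b)^4 = (a^2)^2*(b^2)^2 ∧ (a*b)^2 = a^2*b^2 := by
    intro a b; constructor <;> ring
  simp only [QV0, (e _ _).1, (e _ _).2, hX1, hX2, hY1, hY2]
  ring
end

section
/- Let F be a field of characteristic zero and let K1, K2, K1′, K2′ ∈ F be nonzero elements with K1² + (K1′)² = 1 and K2² + (K2′)² = 1. Set A = ((K1′)² + (K2′)²)/(K1′K2′), B = −((K1K2′)² + (K1′K2)²)/(K1K2K1′K2′), and C = (K1² + K2²)/(K1K2). Then A² + B² + C² + A·B·C = 4; that is, the parameters (A, B, C, D = 0) satisfy the Göpel–Hudson relation D² = A² + B² + C² + ABC − 4. -/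
/-!
Writing `a = K₁/K₂` and `b = K₂′/K₁′`, the parameters are `C = a + a⁻¹`, `A = b + b⁻¹` and
`B = -(ab + (ab)⁻¹)`. These are the traces of `diag(a, a⁻¹)`, `diag(b, b⁻¹)` and of their product
(up to the sign of `B`), so the relation is the Fricke trace identity
`tr(X)² + tr(Y)² + tr(XY)² - tr(X) tr(Y) tr(XY) = 4` for commuting `X, Y ∈ SL₂`.
-/

theorem add_inv_fricke_identity {F : Type*} [Field F] {a b : F} (ha : a ≠ 0) (hb : b ≠ 0) :
    (a + a⁻¹) ^ 2 + (b + b⁻¹) ^ 2 + (a * b + (a * b)⁻¹) ^ 2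
      - (a + a⁻¹) * (b + b⁻¹) * (a * b + (a * b)⁻¹) = 4 := by
  field_simp
  ring

theorem stmt_4_general (F : Type*) [Field F] (K1 K2 K1' K2' : F)
    (h1 : K1 ≠ 0) (h2 : K2 ≠ 0) (h3 : K1' ≠ 0) (h4 : K2' ≠ 0)
    (A B C : F)
    (hA : A = (K1' ^ 2 + K2' ^ 2) / (K1' * K2'))
    (hB : B = -(((K1 * K2') ^ 2 + (K1' * K2) ^ 2) / (K1 * K2 * K1' * K2')))
    (hC : C = (K1 ^ 2 + K2 ^ 2) / (K1 * K2)) :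
    A ^ 2 + B ^ 2 + C ^ 2 + A * B * C = 4 ∧
    (0 : F) ^ 2 = A ^ 2 + B ^ 2 + C ^ 2 + A * B * C - 4 := by
  set a := K1 / K2 with ha
  set b := K2' / K1' with hb
  have hA' : A = b + b⁻¹ := by rw [hA, hb]; field_simp; ring
  have hB' : B = -(a * b + (a * b)⁻¹) := by rw [hB, ha, hb]; field_simp
  have hC' : C = a + a⁻¹ := by rw [hC, ha]; field_simp
  have key : A ^ 2 + B ^ 2 + C ^ 2 + A * B * C = 4 := by
    rw [hA', hB', hC']
    linear_combination add_inv_fricke_identity (div_ne_zero h1 h2) (div_ne_zero h4 h3)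
  exact ⟨key, by rw [key]; ring⟩

/-- with `Λ_l = K_l² = 1 − (K_l′)²`, the parameters
`A = ((K₁′)²+(K₂′)²)/(K₁′K₂′)`, `B = −((K₁K₂′)²+(K₁′K₂)²)/(K₁K₂K₁′K₂′)`,
`C = (K₁²+K₂²)/(K₁K₂)`, `D = 0` satisfy the Göpel–Hudson relation
`D² = A² + B² + C² + ABC − 4`. -/
theorem stmt_4 (F : Type*) [Field F] [CharZero F] (K1 K2 K1' K2' : F)
    (h1 : K1 ≠ 0) (h2 : K2 ≠ 0) (h3 : K1' ≠ 0) (h4 : K2' ≠ 0)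
    (e1 : K1 ^ 2 + K1' ^ 2 = 1) (e2 : K2 ^ 2 + K2' ^ 2 = 1)
    (A B C : F)
    (hA : A = (K1' ^ 2 + K2' ^ 2) / (K1' * K2'))
    (hB : B = -(((K1 * K2') ^ 2 + (K1' * K2) ^ 2) / (K1 * K2 * K1' * K2')))
    (hC : C = (K1 ^ 2 + K2 ^ 2) / (K1 * K2)) :
    A ^ 2 + B ^ 2 + C ^ 2 + A * B * C = 4 ∧
    (0 : F) ^ 2 = A ^ 2 + B ^ 2 + C ^ 2 + A * B * C - 4 :=
  stmt_4_general F K1 K2 K1' K2' h1 h2 h3 h4 A B C hA hB hC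
end

section
/- Let F be a field of characteristic zero, λ2, λ3 ∈ F \ {0,1} with λ2 ≠ λ3 and λ2λ3 ≠ 1, and set λ1 = λ2λ3, L1 = λ1λ2λ3, L2 = λ1λ2+λ2λ3+λ1λ3+λ1λ2λ3, L3 = λ1+λ2+λ3+λ1λ2+λ2λ3+λ1λ3, L4 = 1+λ1+λ2+λ3. Let B(W,X,Y,Z) be the determinant of the 4×4 matrix [[0, L1W, −Z, Y],[L1W, 2L2W+2Z, L3W−Y, X],[−Z, L3W−Y, 2L4W−2X, W],[Y, X, W, 0]]. Then there exists a nonzero c ∈ F such that, identically in Z00, Z01, Z10, Z11 ∈ F, substituting W = Z01 − Z10 − Z11, X = −(1−λ2)(1−λ3)Z00 + (1+λ2λ3)Z01 − (λ2+λ3)Z10, Y = λ2λ3(Z01 − Z10 + Z11), Z = −λ2λ3((1−λ2)(1−λ3)Z00 + (1+λ2λ3)Z01 − (λ2+λ3)Z10) yields B(W,X,Y,Z) = c·Q_{V0}(Z00, Z01, Z10, Z11), where Q_{V0} is formed with Λ1Λ2 = ((λ2+λ3)²−4λ2λ3)/((1−λ2)²(1−λ3)²) and Λ1+Λ2 = −2(λ2+λ3)/((1−λ2)(1−λ3)).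 -/
/-- The Baker determinantal quartic for the genus-two curve with Rosenhain roots
`e1, e2, e3`: determinant of the displayed 4×4 matrix in `W, X, Y, Z`. -/
def bakerDet {F : Type*} [Field F] (e1 e2 e3 W X Y Z : F) : F :=
  let L1 := e1 * e2 * e3
  let L2 := e1 * e2 + e2 * e3 + e1 * e3 + e1 * e2 * e3
  let L3 := e1 + e2 + e3 + e1 * e2 + e2 * e3 + e1 * e3
  let L4 := 1 + e1 + e2 + e3
  Matrix.det !![(0 : F), L1 * W, -Z, Y;
                L1 * W, 2 * L2 * W + 2 * Z, L3 * W - Y, X;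
                -Z, L3 * W - Y, 2 * L4 * W - 2 * X, W;
                Y, X, W, 0]

theorem Matrix.det_fin_four {R : Type*} [CommRing R] (A : Matrix (Fin 4) (Fin 4) R) :
    A.det =
      A 0 0 * (A 1 1 * (A 2 2 * A 3 3 - A 2 3 * A 3 2) - A 1 2 * (A 2 1 * A 3 3 - A 2 3 * A 3 1)
          + A 1 3 * (A 2 1 * A 3 2 - A 2 2 * A 3 1))
      - A 0 1 * (A 1 0 * (A 2 2 * A 3 3 - A 2 3 * A 3 2) - A 1 2 * (A 2 0 * A 3 3 - A 2 3 * A 3 0)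
          + A 1 3 * (A 2 0 * A 3 2 - A 2 2 * A 3 0))
      + A 0 2 * (A 1 0 * (A 2 1 * A 3 3 - A 2 3 * A 3 1) - A 1 1 * (A 2 0 * A 3 3 - A 2 3 * A 3 0)
          + A 1 3 * (A 2 0 * A 3 1 - A 2 1 * A 3 0))
      - A 0 3 * (A 1 0 * (A 2 1 * A 3 2 - A 2 2 * A 3 1) - A 1 1 * (A 2 0 * A 3 2 - A 2 2 * A 3 0)
          + A 1 2 * (A 2 0 * A 3 1 - A 2 1 * A 3 0)) := by
  simp only [Matrix.det_succ_row_zero A, Fin.sum_univ_four, Matrix.det_fin_three,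
    Matrix.submatrix_apply, Fin.succAbove, Fin.reduceSucc, Fin.reduceCastSucc, Fin.reduceLT,
    ↓reduceIte, Fin.coe_ofNat_eq_mod]
  ring

/-- Equals `d⁴ Q_{V₀}` when `Λ₁ + Λ₂ = S / d` and `Λ₁Λ₂ = P / d²`. -/
def QV0Hom {R : Type*} [CommRing R] (d S P Z00 Z01 Z10 Z11 : R) : R :=
  d ^ 4 * Z00 ^ 4 + d ^ 2 * (d ^ 2 - d * S + P) * Z01 ^ 4 + d ^ 2 * P * Z10 ^ 4
    + P * (d ^ 2 - d * S + P) * Z11 ^ 4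
    - d * (2 * d - S) * (d ^ 2 * (Z00 ^ 2 * Z01 ^ 2) + P * (Z10 ^ 2 * Z11 ^ 2))
    - d ^ 2 * (2 * P - d * S) * (Z00 ^ 2 * Z11 ^ 2 + Z01 ^ 2 * Z10 ^ 2)
    - d * S * (d ^ 2 * (Z00 ^ 2 * Z10 ^ 2) + (d ^ 2 - d * S + P) * (Z01 ^ 2 * Z11 ^ 2))

theorem QV0Hom_weighted_homogeneous {R : Type*} [CommRing R] (t d S P Z00 Z01 Z10 Z11 : R) :
    QV0Hom (t * d) (t * S) (t ^ 2 * P) Z00 Z01 Z10 Z11 = t ^ 4 * QV0Hom d S P Z00 Z01 Z10 Z11 := by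
  unfold QV0Hom
  ring

section QV0

variable {F : Type*} [Field F] (Z00 Z01 Z10 Z11 : F)

theorem QV0_eq_QV0Hom_one (L1 L2 : F) :
    QV0 L1 L2 Z00 Z01 Z10 Z11 = QV0Hom 1 (L1 + L2) (L1 * L2) Z00 Z01 Z10 Z11 := by
  unfold QV0 QV0Hom
  ring

theorem QV0_eq_inv_mul_QV0Hom {L1 L2 d S P : F} (hd : d ≠ 0)
    (hS : L1 + L2 = S / d) (hP : L1 * L2 = P / d ^ 2) :
    QV0 L1 L2 Z00 Z01 Z10 Z11 = (d ^ 4)⁻¹ * QV0Hom d S P Z00 Z01 Z10 Z11 := by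
  have hone : (1 : F) = d⁻¹ * d := (inv_mul_cancel₀ hd).symm
  rw [QV0_eq_QV0Hom_one, hS, hP, div_eq_inv_mul, div_eq_inv_mul, hone, ← inv_pow,
    QV0Hom_weighted_homogeneous, inv_pow]

end QV0

theorem bakerDet_rosenhain_substitution {F : Type*} [Field F] (l2 l3 Z00 Z01 Z10 Z11 : F) :
    bakerDet (l2 * l3) l2 l3
        (Z01 - Z10 - Z11)
        (-((1 - l2) * (1 - l3)) * Z00 + (1 + l2 * l3) * Z01 - (l2 + l3) * Z10)
        (l2 * l3 * (Z01 - Z10 + Z11))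
        (-(l2 * l3) * ((1 - l2) * (1 - l3) * Z00 + (1 + l2 * l3) * Z01 - (l2 + l3) * Z10))
      = (l2 * l3) ^ 2 * QV0Hom ((1 - l2) * (1 - l3)) (-(2 * (l2 + l3)))
          ((l2 + l3) ^ 2 - 4 * (l2 * l3)) Z00 Z01 Z10 Z11 := by
  unfold bakerDet QV0Hom
  rw [Matrix.det_fin_four]
  simp only [Matrix.of_apply, Matrix.cons_val', Matrix.cons_val_zero, Matrix.cons_val_one,
    Matrix.cons_val_two, Matrix.cons_val_three, Matrix.empty_val', Matrix.cons_val_fin_one,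
    Matrix.tail_cons, Matrix.vecHead]
  ring

theorem stmt_5_general (F : Type*) [Field F] (l2 l3 L1 L2 : F)
    (hl2 : l2 ≠ 0) (hl2' : l2 ≠ 1) (hl3 : l3 ≠ 0) (hl3' : l3 ≠ 1)
    (hP : L1 * L2 = ((l2 + l3) ^ 2 - 4 * (l2 * l3)) / ((1 - l2) ^ 2 * (1 - l3) ^ 2))
    (hS : L1 + L2 = -(2 * (l2 + l3)) / ((1 - l2) * (1 - l3))) :
    ∃ c : F, c ≠ 0 ∧ ∀ Z00 Z01 Z10 Z11 : F,
      bakerDet (l2 * l3) l2 l3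
        (Z01 - Z10 - Z11)
        (-((1 - l2) * (1 - l3)) * Z00 + (1 + l2 * l3) * Z01 - (l2 + l3) * Z10)
        (l2 * l3 * (Z01 - Z10 + Z11))
        (-(l2 * l3) * ((1 - l2) * (1 - l3) * Z00 + (1 + l2 * l3) * Z01 - (l2 + l3) * Z10))
      = c * QV0 L1 L2 Z00 Z01 Z10 Z11 := by
  have hd : (1 - l2) * (1 - l3) ≠ 0 :=
    mul_ne_zero (sub_ne_zero.mpr hl2'.symm) (sub_ne_zero.mpr hl3'.symm)
  rw [← mul_pow] at hP
  refine ⟨(l2 * l3) ^ 2 * ((1 - l2) * (1 - l3)) ^ 4,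
    mul_ne_zero (pow_ne_zero _ (mul_ne_zero hl2 hl3)) (pow_ne_zero _ hd), fun Z00 Z01 Z10 Z11 => ?_⟩
  rw [bakerDet_rosenhain_substitution, QV0_eq_inv_mul_QV0Hom Z00 Z01 Z10 Z11 hd hS hP,
    mul_assoc, mul_inv_cancel_left₀ (pow_ne_zero _ hd)]

/-- the displayed linear change of coordinates identifies the Baker
determinantal quartic of the genus-two curve with Rosenhain roots
`(λ₁ = λ₂λ₃, λ₂, λ₃)` with the quartic `Q_{V₀}` (formed with the displayed values of
`Λ₁Λ₂` and `Λ₁+Λ₂`) up to a nonvanishing scalar factor. -/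
theorem stmt_5 (F : Type*) [Field F] [CharZero F] (l2 l3 L1 L2 : F)
    (hl2 : l2 ≠ 0) (hl2' : l2 ≠ 1) (hl3 : l3 ≠ 0) (hl3' : l3 ≠ 1)
    (hne : l2 ≠ l3) (hprod : l2 * l3 ≠ 1)
    (hP : L1 * L2 = ((l2 + l3) ^ 2 - 4 * (l2 * l3)) / ((1 - l2) ^ 2 * (1 - l3) ^ 2))
    (hS : L1 + L2 = -(2 * (l2 + l3)) / ((1 - l2) * (1 - l3))) :
    ∃ c : F, c ≠ 0 ∧ ∀ Z00 Z01 Z10 Z11 : F,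
      bakerDet (l2 * l3) l2 l3
        (Z01 - Z10 - Z11)
        (-((1 - l2) * (1 - l3)) * Z00 + (1 + l2 * l3) * Z01 - (l2 + l3) * Z10)
        (l2 * l3 * (Z01 - Z10 + Z11))
        (-(l2 * l3) * ((1 - l2) * (1 - l3) * Z00 + (1 + l2 * l3) * Z01 - (l2 + l3) * Z10))
      = c * QV0 L1 L2 Z00 Z01 Z10 Z11 :=
  stmt_5_general F l2 l3 L1 L2 hl2 hl2' hl3 hl3' hP hS
end

section
/- Let F be a field of characteristic zero and Λ1, Λ2 ∈ F. Suppose x1, z1, x2, z2, y12 ∈ F satisfy y12² = x1z1(x1−z1)(x1−Λ1z1)·x2z2(x2−z2)(x2−Λ2z2). Then Z00 = (x1²−2Λ1x1z1+Λ1z1²)(x2²−2Λ2x2z2+Λ2z2²), Z01 = (x1²−Λ1z1²)(x2²−Λ2z2²), Z10 = (x1²−2x1z1+Λ1z1²)(x2²−2x2z2+Λ2z2²), Z11 = ±4y12 satisfy Q_{V0}(Z00, Z01, Z10, Z11) = 0. -/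
/-- the degree-two rational map `φ_± : 𝒵 ⇢ V₀` from the double quadric
surface of `E₁ × E₂` lands on the quartic `V₀`. -/
theorem stmt_6 (F : Type*) [Field F] [CharZero F] (L1 L2 : F)
    (x1 z1 x2 z2 y12 : F)
    (h : y12 ^ 2 = x1 * z1 * (x1 - z1) * (x1 - L1 * z1) *
      (x2 * z2 * (x2 - z2) * (x2 - L2 * z2)))
    (s : F) (hs : s = 1 ∨ s = -1) :
    QV0 L1 L2
      ((x1 ^ 2 - 2 * L1 * x1 * z1 + L1 * z1 ^ 2) * (x2 ^ 2 - 2 * L2 * x2 * z2 + L2 * z2 ^ 2))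
      ((x1 ^ 2 - L1 * z1 ^ 2) * (x2 ^ 2 - L2 * z2 ^ 2))
      ((x1 ^ 2 - 2 * x1 * z1 + L1 * z1 ^ 2) * (x2 ^ 2 - 2 * x2 * z2 + L2 * z2 ^ 2))
      (s * (4 * y12)) = 0 := by
  have h2 : (s * (4 * y12)) ^ 2 = 16 * y12 ^ 2 := by
    rcases hs with rfl | rfl <;> ring
  have h4 : (s * (4 * y12)) ^ 4 = 256 * (y12 ^ 2) ^ 2 := by
    rcases hs with rfl | rfl <;> ring
  unfold QV0
  rw [h2, h4, h]
  ring
end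

section
/- Let F be a field of characteristic zero and Λ1, Λ2 ∈ F. Suppose X1, Z1, X2, Z2, Y12 ∈ F satisfy Y12² = X1Z1(X1² + 2(1−2Λ1)X1Z1 + Z1²)·X2Z2(X2² + 2(1−2Λ2)X2Z2 + Z2²). Then x1 = 4Λ1X1Z1, z1 = (X1+Z1)², x2 = 4Λ2X2Z2, z2 = (X2+Z2)², ŷ12 = 16Λ1Λ2(X1²−Z1²)(X2²−Z2²)Y12 satisfy ŷ12² = 2⁴·x1z1(x1−z1)(x1−Λ1z1)·x2z2(x2−z2)(x2−Λ2z2). -/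
/-- the rational covering map `χ : 𝒵′ ⇢ 𝒵^{(2⁴)}` induced by the Cartesian
product of the dual two-isogenies: a point of the double quadric surface `𝒵′` of
`E₁′ × E₂′` maps to the quadratic twist (factor `2⁴`) of the double quadric surface of
`E₁ × E₂`. -/
theorem stmt_9 (F : Type*) [Field F] [CharZero F] (L1 L2 : F)
    (X1 Z1 X2 Z2 Y12 : F)
    (h : Y12 ^ 2 = X1 * Z1 * (X1 ^ 2 + 2 * (1 - 2 * L1) * X1 * Z1 + Z1 ^ 2) *
      (X2 * Z2 * (X2 ^ 2 + 2 * (1 - 2 * L2) * X2 * Z2 + Z2 ^ 2))) :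
    let x1 := 4 * L1 * X1 * Z1
    let z1 := (X1 + Z1) ^ 2
    let x2 := 4 * L2 * X2 * Z2
    let z2 := (X2 + Z2) ^ 2
    let y12 := 16 * L1 * L2 * (X1 ^ 2 - Z1 ^ 2) * (X2 ^ 2 - Z2 ^ 2) * Y12
    y12 ^ 2 = 2 ^ 4 * (x1 * z1 * (x1 - z1) * (x1 - L1 * z1) *
      (x2 * z2 * (x2 - z2) * (x2 - L2 * z2))) := by
  intro x1 z1 x2 z2 y12
  linear_combination (256*L1^2*L2^2*(X1^2-Z1^2)^2*(X2^2-Z2^2)^2) * h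
end

section
/- Let F be a field of characteristic zero, Λ1, Λ2 ∈ F, and set ρ1 = Λ1 + Λ2 − 2Λ1Λ2 − 1, ρ2 = 1 − Λ1 − Λ2. Suppose x1, x2, y ∈ F satisfy (x1−1)(x2−1) ≠ 0 and y² = x1(x1−1)(x1−Λ1)·x2(x2−1)(x2−Λ2). Define u = x1x2/((x1−1)(x2−1)), X = x1x2(x1+x2−1)(x1−Λ1)(x1x2−Λ2(x1+x2)+Λ2)/((x1−1)³(x2−1)³), and Y = x1²x2(x1+x2−1)(x1x2−Λ2(x1+x2)+Λ2)·y/((x1−1)⁴(x2−1)⁵). Then Y² = X·(X + (1/2)u(u−1)((ρ1−ρ2)u − (ρ1+ρ2)))·(X + (1/2)u((ρ1−ρ2)u² − 2(ρ1+1)u + (ρ1+ρ2))). -/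
/-!
In terms of `u`, the two shifts in the Weierstrass cubic factor as
`u (u - 1) (Λ₁Λ₂ - (1 - Λ₁)(1 - Λ₂) u)` and `-u ((1 - Λ₁) u + Λ₁) ((1 - Λ₂) u + Λ₂)`.
Substituting `u = x₁x₂ / ((x₁ - 1)(x₂ - 1))`, both `X + a` and `X + b` share most of their
factors with `X`, and the product `X (X + a) (X + b)` becomes a square times
`x₁(x₁ - 1)(x₁ - Λ₁) x₂(x₂ - 1)(x₂ - Λ₂) = y²`.
-/

section Coefficients

variable {F : Type*} [Field F] [NeZero (2 : F)] (L1 L2 u : F)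

theorem half_mul_quadratic_coeff_eq :
    (1 / 2 : F) * u * (u - 1) * (((L1 + L2 - 2 * L1 * L2 - 1) - (1 - L1 - L2)) * u -
      ((L1 + L2 - 2 * L1 * L2 - 1) + (1 - L1 - L2))) =
      u * (u - 1) * (L1 * L2 - (1 - L1) * (1 - L2) * u) := by
  field_simp
  ring

theorem half_mul_cubic_coeff_eq :
    (1 / 2 : F) * u * (((L1 + L2 - 2 * L1 * L2 - 1) - (1 - L1 - L2)) * u ^ 2 -
      2 * ((L1 + L2 - 2 * L1 * L2 - 1) + 1) * u +
      ((L1 + L2 - 2 * L1 * L2 - 1) + (1 - L1 - L2))) =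
      -(u * ((1 - L1) * u + L1) * ((1 - L2) * u + L2)) := by
  field_simp
  ring

end Coefficients

section Substitution

variable {F : Type*} [Field F] (L1 L2 : F) {x1 x2 : F}

theorem add_quadratic_coeff_eq (hx1 : x1 - 1 ≠ 0) (hx2 : x2 - 1 ≠ 0) :
    x1 * x2 * (x1 + x2 - 1) * (x1 - L1) * (x1 * x2 - L2 * (x1 + x2) + L2) /
        ((x1 - 1) ^ 3 * (x2 - 1) ^ 3) +
      x1 * x2 / ((x1 - 1) * (x2 - 1)) * (x1 * x2 / ((x1 - 1) * (x2 - 1)) - 1) *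
        (L1 * L2 - (1 - L1) * (1 - L2) * (x1 * x2 / ((x1 - 1) * (x2 - 1)))) =
      x1 ^ 2 * x2 * (x1 + x2 - 1) * (x1 - 1) * (x2 - L2) / ((x1 - 1) ^ 3 * (x2 - 1) ^ 3) := by
  field_simp
  ring

theorem sub_cubic_coeff_eq (hx1 : x1 - 1 ≠ 0) (hx2 : x2 - 1 ≠ 0) :
    x1 * x2 * (x1 + x2 - 1) * (x1 - L1) * (x1 * x2 - L2 * (x1 + x2) + L2) /
        ((x1 - 1) ^ 3 * (x2 - 1) ^ 3) -
      x1 * x2 / ((x1 - 1) * (x2 - 1)) *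
        ((1 - L1) * (x1 * x2 / ((x1 - 1) * (x2 - 1))) + L1) *
        ((1 - L2) * (x1 * x2 / ((x1 - 1) * (x2 - 1))) + L2) =
      x1 ^ 2 * x2 * (x1 - 1) * (x1 * x2 - L2 * (x1 + x2) + L2) /
        ((x1 - 1) ^ 3 * (x2 - 1) ^ 3) := by
  field_simp
  ring

end Substitution

/-- the birational equivalence between the double quadric surface
`𝒵 : y² = x₁(x₁−1)(x₁−Λ₁)·x₂(x₂−1)(x₂−Λ₂)` and the Weierstrass model of the Jacobian
elliptic fibration with singular fibers `2 I₂* + 4 I₂` on `Kum(E₁ × E₂)`. -/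
theorem stmt_10 (F : Type*) [Field F] [CharZero F] (L1 L2 : F)
    (x1 x2 y : F)
    (hden : (x1 - 1) * (x2 - 1) ≠ 0)
    (h : y ^ 2 = x1 * (x1 - 1) * (x1 - L1) * (x2 * (x2 - 1) * (x2 - L2))) :
    let r1 := L1 + L2 - 2 * L1 * L2 - 1
    let r2 := 1 - L1 - L2
    let u := x1 * x2 / ((x1 - 1) * (x2 - 1))
    let X := x1 * x2 * (x1 + x2 - 1) * (x1 - L1) * (x1 * x2 - L2 * (x1 + x2) + L2) /
      ((x1 - 1) ^ 3 * (x2 - 1) ^ 3)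
    let Y := x1 ^ 2 * x2 * (x1 + x2 - 1) * (x1 * x2 - L2 * (x1 + x2) + L2) * y /
      ((x1 - 1) ^ 4 * (x2 - 1) ^ 5)
    Y ^ 2 = X * (X + (1 / 2 : F) * u * (u - 1) * ((r1 - r2) * u - (r1 + r2))) *
      (X + (1 / 2 : F) * u * ((r1 - r2) * u ^ 2 - 2 * (r1 + 1) * u + (r1 + r2))) := by
  intro r1 r2 u X Y
  have hx1 : x1 - 1 ≠ 0 := left_ne_zero_of_mul hden
  have hx2 : x2 - 1 ≠ 0 := right_ne_zero_of_mul hden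
  have hA : X + (1 / 2 : F) * u * (u - 1) * ((r1 - r2) * u - (r1 + r2)) =
      x1 ^ 2 * x2 * (x1 + x2 - 1) * (x1 - 1) * (x2 - L2) / ((x1 - 1) ^ 3 * (x2 - 1) ^ 3) := by
    rw [half_mul_quadratic_coeff_eq]
    exact add_quadratic_coeff_eq L1 L2 hx1 hx2
  have hB : X + (1 / 2 : F) * u * ((r1 - r2) * u ^ 2 - 2 * (r1 + 1) * u + (r1 + r2)) =
      x1 ^ 2 * x2 * (x1 - 1) * (x1 * x2 - L2 * (x1 + x2) + L2) /
        ((x1 - 1) ^ 3 * (x2 - 1) ^ 3) := by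
    rw [half_mul_cubic_coeff_eq, ← sub_eq_add_neg]
    exact sub_cubic_coeff_eq L1 L2 hx1 hx2
  rw [hA, hB]
  simp only [X, Y, div_pow, mul_pow, h]
  field_simp
end

section
/- Let F be a field of characteristic zero and let λ1, λ2, λ3 ∈ F \ {0,1} be pairwise distinct. Suppose u, X, Y ∈ F satisfy Y² = X·(X + (λ1−λ3)(λ2−1)u(u−λ2)(u−λ1λ3))·(X + (λ1−λ2)(λ3−1)u(u−λ3)(u−λ1λ2)) and the element D := X − λ1(λ2−1)(λ3−1)u(u−λ2)(u−λ3) is nonzero. Define N = (λ1−1)(λ2−1)(λ3−1)u(u−λ1)(u−λ2)(u−λ3), z2 = N/D + u + 1, z3 = u, and z̃4 = N·Y/D². Then z̃4² = z3·(1 − z2 + z3)·∏_{i=1}^{3}(λi² − λi z2 + z3). -/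
/-!
Substituting `z₂ = N/D + u + 1`, `z₃ = u` turns `1 − z₂ + z₃` into `−N/D` and each factor
`λᵢ² − λᵢ z₂ + z₃` into `(λᵢ − 1)(λᵢ − u)·Xᵢ/D`, where `X₁ = X` and `X₂`, `X₃` are the other two
linear factors of the Weierstrass cubic. Since `u·∏ᵢ(λᵢ − 1)(λᵢ − u) = −N`, the right-hand side of
the sextic becomes `N²·X₁X₂X₃/D⁴ = (N·Y/D²)²`.
-/

section

variable {F : Type*} [Field F]

lemma sq_sub_mul_add_eq_of_mul_sub {l u N D X : F} (hD : D ≠ 0)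
    (h : (l - 1) * (l - u) * D - l * N = (l - 1) * (l - u) * X) :
    l ^ 2 - l * (N / D + u + 1) + u = (l - 1) * (l - u) * X / D := by
  rw [← h]
  field_simp
  ring

lemma sq_mul_div_sq_eq_of_sq_eq {N D Y u X₁ X₂ X₃ c₁ c₂ c₃ : F} (hD : D ≠ 0)
    (hY : Y ^ 2 = X₁ * X₂ * X₃) (hN : u * c₁ * c₂ * c₃ = -N) :
    (N * Y / D ^ 2) ^ 2 = u * -(N / D) * (c₁ * X₁ / D * (c₂ * X₂ / D) * (c₃ * X₃ / D)) := by
  field_simp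
  linear_combination N ^ 2 * hY + N * (X₁ * X₂ * X₃) * hN

end

theorem stmt_11_general (F : Type*) [Field F] (l1 l2 l3 : F)
    (u X Y : F)
    (hW : Y ^ 2 = X * (X + (l1 - l3) * (l2 - 1) * u * (u - l2) * (u - l1 * l3)) *
      (X + (l1 - l2) * (l3 - 1) * u * (u - l3) * (u - l1 * l2)))
    (hD : X - l1 * (l2 - 1) * (l3 - 1) * u * (u - l2) * (u - l3) ≠ 0) :
    let D := X - l1 * (l2 - 1) * (l3 - 1) * u * (u - l2) * (u - l3)
    let N := (l1 - 1) * (l2 - 1) * (l3 - 1) * u * (u - l1) * (u - l2) * (u - l3)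
    let z2 := N / D + u + 1
    let z3 := u
    let z4 := N * Y / D ^ 2
    z4 ^ 2 = z3 * (1 - z2 + z3) *
      ((l1 ^ 2 - l1 * z2 + z3) * (l2 ^ 2 - l2 * z2 + z3) * (l3 ^ 2 - l3 * z2 + z3)) := by
  intro D N z2 z3 z4
  have hz : 1 - z2 + z3 = -(N / D) := by ring
  rw [hz, sq_sub_mul_add_eq_of_mul_sub hD (X := X) (by ring),
    sq_sub_mul_add_eq_of_mul_sub hD
      (X := X + (l1 - l2) * (l3 - 1) * u * (u - l3) * (u - l1 * l2)) (by ring),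
    sq_sub_mul_add_eq_of_mul_sub hD
      (X := X + (l1 - l3) * (l2 - 1) * u * (u - l2) * (u - l1 * l3)) (by ring)]
  exact sq_mul_div_sq_eq_of_sq_eq hD (by rw [hW]; ring) (by ring)

/-- the birational equivalence from the Weierstrass model of Kumar's
fibration (1) on `Kum(Jac C)` back to the Shioda sextic
`z̃₄² = z₃(1−z₂+z₃)·∏ᵢ(λᵢ²−λᵢz₂+z₃)` (affine chart `z₁ = 1`). -/
theorem stmt_11 (F : Type*) [Field F] [CharZero F] (l1 l2 l3 : F)
    (h1 : l1 ≠ 0) (h1' : l1 ≠ 1) (h2 : l2 ≠ 0) (h2' : l2 ≠ 1)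
    (h3 : l3 ≠ 0) (h3' : l3 ≠ 1)
    (h12 : l1 ≠ l2) (h13 : l1 ≠ l3) (h23 : l2 ≠ l3)
    (u X Y : F)
    (hW : Y ^ 2 = X * (X + (l1 - l3) * (l2 - 1) * u * (u - l2) * (u - l1 * l3)) *
      (X + (l1 - l2) * (l3 - 1) * u * (u - l3) * (u - l1 * l2)))
    (hD : X - l1 * (l2 - 1) * (l3 - 1) * u * (u - l2) * (u - l3) ≠ 0) :
    let D := X - l1 * (l2 - 1) * (l3 - 1) * u * (u - l2) * (u - l3)
    let N := (l1 - 1) * (l2 - 1) * (l3 - 1) * u * (u - l1) * (u - l2) * (u - l3)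
    let z2 := N / D + u + 1
    let z3 := u
    let z4 := N * Y / D ^ 2
    z4 ^ 2 = z3 * (1 - z2 + z3) *
      ((l1 ^ 2 - l1 * z2 + z3) * (l2 ^ 2 - l2 * z2 + z3) * (l3 ^ 2 - l3 * z2 + z3)) :=
  stmt_11_general F l1 l2 l3 u X Y hW hD
end

section
/- Let F be a field of characteristic zero and let λ1, λ2, λ3 ∈ F satisfy λ1 ≠ 1 and λ2 ≠ λ3. Set A = 2(λ1+1)/(λ1−1), B = 2(λ1λ2 + λ1λ3 − 2λ2λ3 − 2λ1 + λ2 + λ3)/((λ2−λ3)(λ1−1)), C = 2(λ3+λ2)/(λ3−λ2), and D = 4(λ1 − λ2λ3)/((λ2−λ3)(λ1−1)). Then D² = A² + B² + C² + ABC − 4. In particular D = 0 if and only if λ1 = λ2λ3. -/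
/-- the Göpel–Hudson parameters `(A,B,C,D)` of the Kummer surface of the
Jacobian of the Rosenhain genus-two curve satisfy `D² = A²+B²+C²+ABC−4`, and `D = 0` if
and only if `λ₁ = λ₂λ₃`. -/
theorem stmt_15 (F : Type*) [Field F] [CharZero F] (l1 l2 l3 : F)
    (h1 : l1 ≠ 1) (h23 : l2 ≠ l3)
    (A B C D : F)
    (hA : A = 2 * (l1 + 1) / (l1 - 1))
    (hB : B = 2 * (l1 * l2 + l1 * l3 - 2 * l2 * l3 - 2 * l1 + l2 + l3) /
      ((l2 - l3) * (l1 - 1)))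
    (hC : C = 2 * (l3 + l2) / (l3 - l2))
    (hD : D = 4 * (l1 - l2 * l3) / ((l2 - l3) * (l1 - 1))) :
    D ^ 2 = A ^ 2 + B ^ 2 + C ^ 2 + A * B * C - 4 ∧ (D = 0 ↔ l1 = l2 * l3) := by
  have hp : l1 - 1 ≠ 0 := sub_ne_zero.mpr h1
  have hq : l2 - l3 ≠ 0 := sub_ne_zero.mpr h23
  have hr : l3 - l2 ≠ 0 := sub_ne_zero.mpr (Ne.symm h23)
  have hqp : (l2 - l3) * (l1 - 1) ≠ 0 := mul_ne_zero hq hp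
  have hA' : A * (l1 - 1) = 2 * (l1 + 1) := by
    rw [hA, div_mul_cancel₀ _ hp]
  have hB' : B * ((l2 - l3) * (l1 - 1)) =
      2 * (l1 * l2 + l1 * l3 - 2 * l2 * l3 - 2 * l1 + l2 + l3) := by
    rw [hB, div_mul_cancel₀ _ hqp]
  have hC' : C * (l3 - l2) = 2 * (l3 + l2) := by
    rw [hC, div_mul_cancel₀ _ hr]
  have hD' : D * ((l2 - l3) * (l1 - 1)) = 4 * (l1 - l2 * l3) := by
    rw [hD, div_mul_cancel₀ _ hqp]
  constructor
  · have hsq : ((l2 - l3) * (l1 - 1)) ^ 2 ≠ 0 := pow_ne_zero _ hqp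
    apply mul_right_cancel₀ hsq
    linear_combination
      (D * ((l2 - l3) * (l1 - 1)) + 4 * (l1 - l2 * l3)) * hD'
      - (l2 - l3) ^ 2 * (A * (l1 - 1) + 2 * (l1 + 1)) * hA'
      - (B * ((l2 - l3) * (l1 - 1)) +
          2 * (l1 * l2 + l1 * l3 - 2 * l2 * l3 - 2 * l1 + l2 + l3)) * hB'
      - (l1 - 1) ^ 2 * (C * (l3 - l2) + 2 * (l3 + l2)) * hC'
      + (B * ((l2 - l3) * (l1 - 1))) * (C * (l3 - l2)) * hA'
      + (2 * (l1 + 1)) * (C * (l3 - l2)) * hB'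
      + (2 * (l1 + 1)) *
          (2 * (l1 * l2 + l1 * l3 - 2 * l2 * l3 - 2 * l1 + l2 + l3)) * hC'
  · rw [hD, div_eq_zero_iff]
    constructor
    · rintro (h | h)
      · have h4 : (4 : F) ≠ 0 := by norm_num
        have := (mul_eq_zero.mp h).resolve_left h4
        exact sub_eq_zero.mp this
      · exact absurd h hqp
    · intro h
      left; rw [h]; ring
end

section
/- Let F be a field of characteristic zero and let α, t ∈ F with α ≠ 1 and t ≠ 0. Set A = α², B = (α−2)² (so that (A + B − 4)² − 4AB = 0), and x0 = −4(At−1)(Bt−1)/((A−B)²t). Then the identity x0·t·(x0 − t)·(x0 − 1)·(At−1)(Bt−1) = −[(α²t−1)((α−2)²t−1)((α²−2α+2)t−1)(α(α−2)t+1)]²/(64(α−1)⁶t²) holds. Consequently, over F(i) with i² = −1, the Jacobian elliptic fibration y² = x·t·(x−t)(x−1)(At−1)(Bt−1) admits the non-torsion section x = x0, y = ± i(α²t−1)((α−2)²t−1)((α²−2α+2)t−1)(α(α−2)t+1)/(8(α−1)³t). -/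
/-!
Write `P = (At - 1)(Bt - 1)` and `c = 4(α - 1)²t`, so that `(A - B)²t = 4c` and `x₀ = -P/c`.
On the conic the three quantities `x₀`, `x₀ - t`, `x₀ - 1` all have this shape: `P + ct` and
`P + c` are the perfect squares `Q²` and `R²` with `Q = (α² - 2α + 2)t - 1` and
`R = α(α - 2)t + 1`. Hence `x₀ t (x₀ - t)(x₀ - 1) P = -(P Q R)² t / c³` is minus a square,
which gives `y` over `F(i)`.
-/

section LegendreSquares

variable {R : Type*} [CommRing R] (α t : R)

theorem conic_of_parametrization :
    (α ^ 2 + (α - 2) ^ 2 - 4) ^ 2 - 4 * α ^ 2 * (α - 2) ^ 2 = 0 := by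
  ring

theorem legendre_product_add_mul_self_eq_sq :
    (α ^ 2 * t - 1) * ((α - 2) ^ 2 * t - 1) + 4 * (α - 1) ^ 2 * t * t =
      ((α ^ 2 - 2 * α + 2) * t - 1) ^ 2 := by
  ring

theorem legendre_product_add_eq_sq :
    (α ^ 2 * t - 1) * ((α - 2) ^ 2 * t - 1) + 4 * (α - 1) ^ 2 * t =
      (α * (α - 2) * t + 1) ^ 2 := by
  ring

end LegendreSquares

theorem mul_mul_sub_mul_sub_one_mul_eq_neg_sq {F : Type*} [Field F] {x t P Q R c : F}
    (hc : c ≠ 0) (hx : x = -P / c) (hQ : P + c * t = Q ^ 2) (hR : P + c = R ^ 2) :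
    x * t * (x - t) * (x - 1) * P = -(P * Q * R) ^ 2 * t / c ^ 3 := by
  have hxt : x - t = -Q ^ 2 / c := by rw [hx, ← hQ]; field_simp; ring
  have hx1 : x - 1 = -R ^ 2 / c := by rw [hx, ← hR]; field_simp; ring
  rw [hxt, hx1, hx]
  field_simp

/-- on the conic `(A+B−4)² − 4AB = 0`, parametrized by `A = α²`,
`B = (α−2)²`, the elliptic fibration `y² = x·t·(x−t)(x−1)(At−1)(Bt−1)` on the twisted
Legendre K3 surface admits (over `F(i)`) the non-torsion section with
`x = −4(At−1)(Bt−1)/((A−B)²t)`. -/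
theorem stmt_17 (F : Type*) [Field F] [CharZero F] (α t : F)
    (hα : α ≠ 1) (ht : t ≠ 0) :
    let A := α ^ 2
    let B := (α - 2) ^ 2
    let x0 := -4 * (A * t - 1) * (B * t - 1) / ((A - B) ^ 2 * t)
    ((A + B - 4) ^ 2 - 4 * A * B = 0) ∧
    x0 * t * (x0 - t) * (x0 - 1) * ((A * t - 1) * (B * t - 1)) =
      -((α ^ 2 * t - 1) * ((α - 2) ^ 2 * t - 1) * ((α ^ 2 - 2 * α + 2) * t - 1) *
          (α * (α - 2) * t + 1)) ^ 2 / (64 * (α - 1) ^ 6 * t ^ 2) ∧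
    ∀ i : F, i ^ 2 = -1 → ∀ s : F, s = 1 ∨ s = -1 →
      (s * i * ((α ^ 2 * t - 1) * ((α - 2) ^ 2 * t - 1) * ((α ^ 2 - 2 * α + 2) * t - 1) *
        (α * (α - 2) * t + 1)) / (8 * (α - 1) ^ 3 * t)) ^ 2 =
        x0 * t * (x0 - t) * (x0 - 1) * ((A * t - 1) * (B * t - 1)) := by
  intro A B x0
  have h4 : (4 : F) ≠ 0 := by norm_num
  have hc : 4 * (α - 1) ^ 2 * t ≠ 0 :=
    mul_ne_zero (mul_ne_zero h4 (pow_ne_zero 2 (sub_ne_zero.mpr hα))) ht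
  have hx0 : x0 = -((A * t - 1) * (B * t - 1)) / (4 * (α - 1) ^ 2 * t) := by
    simp only [x0, A, B]
    rw [show (α ^ 2 - (α - 2) ^ 2) ^ 2 * t = 4 * (4 * (α - 1) ^ 2 * t) by ring,
      div_eq_div_iff (mul_ne_zero h4 hc) hc]
    ring
  have key : x0 * t * (x0 - t) * (x0 - 1) * ((A * t - 1) * (B * t - 1)) =
      -((α ^ 2 * t - 1) * ((α - 2) ^ 2 * t - 1) * ((α ^ 2 - 2 * α + 2) * t - 1) *
          (α * (α - 2) * t + 1)) ^ 2 / (64 * (α - 1) ^ 6 * t ^ 2) := by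
    rw [mul_mul_sub_mul_sub_one_mul_eq_neg_sq hc hx0
      (legendre_product_add_mul_self_eq_sq α t) (legendre_product_add_eq_sq α t)]
    field_simp
    ring
  refine ⟨conic_of_parametrization α, key, ?_⟩
  rintro i hi s hs
  have hs2 : s ^ 2 = 1 := by rcases hs with rfl | rfl <;> norm_num
  rw [key, div_pow, mul_pow, mul_pow, hs2, hi]
  ring
end
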